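/- Let g : ℝ → ℝ be twice continuously differentiable with g, g', g'' ∈ L²(ℝ), and with g(x) → 0 and g'(x) → 0 as |x| → ∞. Then ‖g'‖_{L²}² ≤ ‖g‖_{L²} · ‖g''‖_{L²}. -/

import Mathlib

/-!
Integrating by parts, with the boundary term `g g'` vanishing at `±∞`, gives
`‖g'‖² = -∫ g g''`, and Cauchy–Schwarz bounds the right-hand side by `‖g‖ ‖g''‖`.
-/

open MeasureTheory Filter Set intervalIntegral

/-- The `L²(ℝ)` norm `(∫ℝ |g(x)|² dx)^(1/2)`. -/
noncomputable def L2Norm (g : ℝ → ℝ) : ℝ := (∫ x : ℝ, (g x) ^ 2) ^ ((1 : ℝ) / 2)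

/-- `g ∈ L²(ℝ)`, i.e. `∫ℝ |g(x)|² dx < ∞`. -/
def MemL2 (g : ℝ → ℝ) : Prop := MeasureTheory.Integrable fun x => (g x) ^ 2

lemma L2Norm_sq (f : ℝ → ℝ) : L2Norm f ^ 2 = ∫ x, f x ^ 2 := by
  rw [L2Norm, ← Real.rpow_natCast, ← Real.rpow_mul (integral_nonneg fun x => sq_nonneg (f x))]
  norm_num

lemma abs_integral_mul_le_L2Norm_mul_L2Norm {f h : ℝ → ℝ} (hf : MemLp f 2 volume)
    (hh : MemLp h 2 volume) : |∫ x, f x * h x| ≤ L2Norm f * L2Norm h := by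
  have hp : ENNReal.ofReal 2 = 2 := by norm_num
  have hnorm_sq (u : ℝ → ℝ) : ∫ x, ‖u x‖ ^ (2 : ℝ) = ∫ x, u x ^ 2 := by
    simp only [Real.norm_eq_abs, Real.rpow_two, sq_abs]
  calc |∫ x, f x * h x| ≤ ∫ x, ‖f x‖ * ‖h x‖ := by
        rw [← Real.norm_eq_abs]
        simpa only [norm_mul] using norm_integral_le_integral_norm (fun x => f x * h x)
    _ ≤ (∫ x, ‖f x‖ ^ (2 : ℝ)) ^ (1 / (2 : ℝ)) *
          (∫ x, ‖h x‖ ^ (2 : ℝ)) ^ (1 / (2 : ℝ)) :=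
        integral_mul_norm_le_Lp_mul_Lq Real.HolderConjugate.two_two (hp ▸ hf) (hp ▸ hh)
    _ = L2Norm f * L2Norm h := by rw [hnorm_sq, hnorm_sq, L2Norm, L2Norm]

lemma integral_mul_iteratedDeriv_two_eq_neg_integral_deriv_sq {g : ℝ → ℝ}
    (hg : ContDiff ℝ 2 g)
    (hgg'' : Integrable fun x => g x * iteratedDeriv 2 g x)
    (hg'_sq : Integrable fun x => deriv g x ^ 2)
    (hdecay : Tendsto (fun x => g x * deriv g x) (cocompact ℝ) (nhds 0)) :
    ∫ x, g x * iteratedDeriv 2 g x = -∫ x, deriv g x ^ 2 := by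
  have hg' : ContDiff ℝ 1 (deriv g) := (contDiff_succ_iff_deriv.mp hg).2.2
  have hg'' : iteratedDeriv 2 g = deriv (deriv g) := by
    rw [iteratedDeriv_succ', iteratedDeriv_one]
  rw [cocompact_eq_atBot_atTop, tendsto_sup] at hdecay
  rw [hg''] at hgg'' ⊢
  have := integral_mul_deriv_eq_deriv_mul (u := g) (v := deriv g)
    (fun x _ => (hg.differentiable (by norm_num) x).hasDerivAt)
    (fun x _ => (hg'.differentiable one_ne_zero x).hasDerivAt) hgg''
    (show Integrable fun x => deriv g x * deriv g x by simpa only [sq] using hg'_sq)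
    hdecay.1 hdecay.2
  simpa [sq] using this

/-- interpolation inequality. If `g ∈ C²` with `g, g', g'' ∈ L²(ℝ)`
and `g(x), g'(x) → 0` as `|x| → ∞`, then `‖g'‖² ≤ ‖g‖ ‖g''‖`. -/
theorem deriv_interpolation
    (g : ℝ → ℝ) (hg : ContDiff ℝ 2 g)
    (hL2 : MemL2 g) (hL2' : MemL2 (deriv g)) (hL2'' : MemL2 (iteratedDeriv 2 g))
    (hdecay : Tendsto g (cocompact ℝ) (nhds 0))
    (hdecay' : Tendsto (deriv g) (cocompact ℝ) (nhds 0)) :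
    L2Norm (deriv g) ^ 2 ≤ L2Norm g * L2Norm (iteratedDeriv 2 g) := by
  have hg_L2 : MemLp g 2 volume :=
    (memLp_two_iff_integrable_sq hg.continuous.aestronglyMeasurable).2 hL2
  have hg''_L2 : MemLp (iteratedDeriv 2 g) 2 volume :=
    (memLp_two_iff_integrable_sq
      (hg.continuous_iteratedDeriv 2 le_rfl).aestronglyMeasurable).2 hL2''
  have hibp : ∫ x, g x * iteratedDeriv 2 g x = -∫ x, deriv g x ^ 2 :=
    integral_mul_iteratedDeriv_two_eq_neg_integral_deriv_sq hg
      (hg_L2.integrable_mul hg''_L2) hL2' (by simpa using hdecay.mul hdecay')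
  calc L2Norm (deriv g) ^ 2 = -∫ x, g x * iteratedDeriv 2 g x := by rw [L2Norm_sq, hibp, neg_neg]
    _ ≤ |∫ x, g x * iteratedDeriv 2 g x| := neg_le_abs _
    _ ≤ L2Norm g * L2Norm (iteratedDeriv 2 g) :=
      abs_integral_mul_le_L2Norm_mul_L2Norm hg_L2 hg''_L2
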